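/- For every stochastic graph 𝒢 = (V, E, w), every probabilistic suspect set 𝒱_I = (V_I, p), and every node set S ⊆ V, the node influence suspension of S equals the total walk probability of the hitting self-avoiding walks whose node set intersects S; precisely, D⁽ⁿ⁾(S, 𝒱_I) equals the sum of Pr[h is an HSAW of (g, X)] over all finite sequences h of pairwise distinct nodes ending at a node of V_I whose node set intersects S. Consequently, if I_𝒢(𝒱_I) > 0 then D⁽ⁿ⁾(S, 𝒱_I) = I_𝒢(𝒱_I) · Pr[S intersects the node set of a random HSAW], where a random HSAW is drawn with probability proportional to its walk probability. -/

import Mathlib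

/-!
In a live-edge sample every node has at most one live in-edge, so from a node `v` the walk
`v, g v, g (g v), …` is forced; `v` is reachable from the seed set `X` exactly when this walk
meets `X` before repeating a node, and then its initial segment up to that point is the unique
HSAW of `(g, X)` starting at `v`. Hence the number of reachable nodes is the number of HSAWs, and
taking expectations, the spread is the total walk probability of all self-avoiding walks, in `𝒢`
as in `𝒢` with `S` deleted. A walk lies in the sample graph iff the independent in-edge choices of
its own nodes are the right ones, so a walk avoiding `S` has the same probability in both graphs,
while a walk through `S` has probability `0` after the deletion.
-/

noncomputable section
open scoped Classical

/-- Probability of a live-edge sample `g : V → Option V` under weights `w`: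
independently for each node `v`, `g v = some u` with probability `w u v` and
`g v = none` with probability `1 − ∑_u w u v`. -/
def sampleProb {V : Type} [Fintype V] (w : V → V → ℝ) (g : V → Option V) : ℝ :=
  ∏ v : V, (g v).elim (1 - ∑ u : V, w u v) (fun u => w u v)

/-- `v` is reachable from the seed set `S` in the sample graph of `g`,
which has an edge `(u, v)` exactly when `g v = some u`. -/
def Reachable {V : Type} (g : V → Option V) (S : Finset V) (v : V) : Prop :=
  ∃ s ∈ S, Relation.ReflTransGen (fun x y => g y = some x) s v

/-- Influence spread of a seed set `S`: the expected number of nodes reachable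
from `S` in the live-edge sample graph. -/
def influence {V : Type} [Fintype V] [DecidableEq V] (w : V → V → ℝ) (S : Finset V) : ℝ :=
  ∑ g : V → Option V, sampleProb w g * (Nat.card {v : V // Reachable g S v} : ℝ)

/-- Probability that the random seed set equals `X`, when each `v ∈ VI` is
included independently with probability `p v`. -/
def seedProb {V : Type} [DecidableEq V] (VI : Finset V) (p : V → ℝ) (X : Finset V) : ℝ :=
  (∏ u ∈ X, p u) * ∏ v ∈ VI \ X, (1 - p v)

/-- Expected influence spread of the probabilistic suspect set `(VI, p)`. -/
def influenceVI {V : Type} [Fintype V] [DecidableEq V]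
    (w : V → V → ℝ) (VI : Finset V) (p : V → ℝ) : ℝ :=
  ∑ X ∈ VI.powerset, seedProb VI p X * influence w X

/-- `h = ⟨v₁,…,v_l⟩` is a hitting self-avoiding walk of `(g, X)`: a nonempty
list of pairwise distinct nodes with `g vᵢ = some vᵢ₊₁` for `1 ≤ i < l`
and `{v₁,…,v_l} ∩ X = {v_l}`. -/
def IsHSAW {V : Type} [DecidableEq V] (g : V → Option V) (X : Finset V) (h : List V) : Prop :=
  h ≠ [] ∧ h.Nodup ∧ h.Chain' (fun a b => g a = some b) ∧
    ∀ v ∈ h, (v ∈ X ↔ h.getLast? = some v)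

/-- Probability, over the random pair `(g, X)`, that the fixed walk `h`
is a hitting self-avoiding walk of `(g, X)`. -/
def walkProb {V : Type} [Fintype V] [DecidableEq V]
    (w : V → V → ℝ) (VI : Finset V) (p : V → ℝ) (h : List V) : ℝ :=
  ∑ g : V → Option V, ∑ X ∈ VI.powerset,
    (if IsHSAW g X h then sampleProb w g * seedProb VI p X else 0)

/-- The edge set of a walk `⟨v₁,…,v_l⟩`: the edges `(vᵢ₊₁, vᵢ)` for `1 ≤ i < l`. -/
def walkEdges {V : Type} (h : List V) : List (V × V) :=
  (h.zip h.tail).map Prod.swap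


/-- Expected influence spread of `(VI, p)` in the graph obtained by deleting the
nodes of `S` together with all incident edges: edges touching `S` get weight `0`
and seeds in `S` are removed. -/
def influenceVIDelNodes {V : Type} [Fintype V] [DecidableEq V]
    (w : V → V → ℝ) (VI : Finset V) (p : V → ℝ) (S : Finset V) : ℝ :=
  ∑ X ∈ VI.powerset, seedProb VI p X *
    influence (fun u v => if u ∈ S ∨ v ∈ S then 0 else w u v) (X \ S)


section

variable {V : Type}

theorem List.isChain_iff_forall_mem_zip_tail {R : V → V → Prop} {l : List V} :
    l.IsChain R ↔ ∀ a b, (a, b) ∈ l.zip l.tail → R a b := by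
  induction l using List.twoStepInduction with
  | nil => simp
  | singleton => simp
  | cons_cons a b l _ ih => simp_all [List.isChain_cons_cons, or_imp, forall_and]

theorem mem_walkEdges {h : List V} {u v : V} : (u, v) ∈ walkEdges h ↔ (v, u) ∈ h.zip h.tail := by
  rw [walkEdges, List.mem_map]
  constructor
  · rintro ⟨⟨a, b⟩, he, hab⟩
    obtain ⟨rfl, rfl⟩ : b = u ∧ a = v := Prod.mk.inj hab
    exact he
  · exact fun he => ⟨_, he, rfl⟩

theorem isChain_iff_forall_mem_walkEdges {g : V → Option V} {h : List V} :
    h.IsChain (fun a b => g a = some b) ↔ ∀ u v, (u, v) ∈ walkEdges h → g v = some u := by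
  simp only [List.isChain_iff_forall_mem_zip_tail, mem_walkEdges]
  exact forall_comm

theorem mem_of_mem_walkEdges {h : List V} {u v : V} (he : (u, v) ∈ walkEdges h) :
    u ∈ h ∧ v ∈ h := by
  have hzip := List.of_mem_zip (mem_walkEdges.mp he)
  exact ⟨List.mem_of_mem_tail hzip.2, hzip.1⟩

theorem exists_mem_walkEdges_of_ne_getLast {h : List V} {v : V} (hv : v ∈ h)
    (hlast : h.getLast? ≠ some v) : ∃ u, (u, v) ∈ walkEdges h := by
  induction h with
  | nil => simp at hv
  | cons a t ih =>
    cases t with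
    | nil => simp_all
    | cons b s =>
      simp only [mem_walkEdges] at ih ⊢
      rcases List.mem_cons.mp hv with rfl | hvt
      · exact ⟨b, by simp⟩
      · obtain ⟨u, hu⟩ := ih hvt (by simpa using hlast)
        exact ⟨u, by simp_all⟩

end

namespace IsHSAW

variable {V : Type} [DecidableEq V] {g : V → Option V} {X : Finset V}

theorem isChain {h : List V} (hh : IsHSAW g X h) : h.IsChain (fun a b => g a = some b) :=
  hh.2.2.1

theorem mem_iff_eq_nil {a : V} {t : List V} (hh : IsHSAW g X (a :: t)) : a ∈ X ↔ t = [] := by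
  rw [hh.2.2.2 a List.mem_cons_self]
  cases t with
  | nil => simp
  | cons b s =>
    simp only [List.getLast?_cons_cons, reduceCtorEq, iff_false]
    exact fun hlast => (List.nodup_cons.mp hh.2.1).1 (List.mem_of_getLast? hlast)

theorem singleton {v : V} (hv : v ∈ X) : IsHSAW g X [v] :=
  ⟨List.cons_ne_nil _ _, List.nodup_singleton v, .singleton v, by simp [hv]⟩

theorem tail {a b : V} {t : List V} (hh : IsHSAW g X (a :: b :: t)) : IsHSAW g X (b :: t) := by
  obtain ⟨-, hnd, hc, hx⟩ := hh
  refine ⟨List.cons_ne_nil _ _, (List.nodup_cons.mp hnd).2, hc.tail, fun v hv => ?_⟩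
  simpa using hx v (List.mem_cons_of_mem a hv)

theorem cons {u c : V} {t : List V} (hh : IsHSAW g X (u :: t)) (hcX : c ∉ X)
    (hct : c ∉ u :: t) (hcu : g c = some u) : IsHSAW g X (c :: u :: t) := by
  refine ⟨List.cons_ne_nil _ _, List.nodup_cons.mpr ⟨hct, hh.2.1⟩,
    List.isChain_cons_cons.mpr ⟨hcu, hh.isChain⟩, fun v hv => ?_⟩
  rw [List.getLast?_cons_cons]
  rcases List.mem_cons.mp hv with rfl | hv
  · exact iff_of_false hcX fun hlast => hct (List.mem_of_getLast? hlast)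
  · exact hh.2.2.2 v hv

theorem of_append {s t : List V} (hh : IsHSAW g X (s ++ t)) (ht : t ≠ []) : IsHSAW g X t := by
  induction s with
  | nil => simpa using hh
  | cons a s ih =>
    obtain ⟨b, t', hbt⟩ := List.exists_cons_of_ne_nil (List.append_ne_nil_of_right_ne_nil s ht)
    rw [List.cons_append, hbt] at hh
    exact ih (hbt ▸ hh.tail)

theorem exists_cons_of_mem {h : List V} {v : V} (hh : IsHSAW g X h) (hv : v ∈ h) :
    ∃ t, IsHSAW g X (v :: t) := by
  obtain ⟨s, t, rfl⟩ := List.append_of_mem hv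
  exact ⟨t, hh.of_append (List.cons_ne_nil _ _)⟩

theorem tail_unique {a : V} {t₁ t₂ : List V} (h₁ : IsHSAW g X (a :: t₁))
    (h₂ : IsHSAW g X (a :: t₂)) : t₁ = t₂ := by
  induction t₁ generalizing a t₂ with
  | nil => exact ((h₂.mem_iff_eq_nil).mp ((h₁.mem_iff_eq_nil).mpr rfl)).symm
  | cons b₁ s₁ ih =>
    have haX : a ∉ X := fun ha => List.cons_ne_nil _ _ ((h₁.mem_iff_eq_nil).mp ha)
    obtain ⟨b₂, s₂, rfl⟩ := List.exists_cons_of_ne_nil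
      fun ht₂ => haX ((h₂.mem_iff_eq_nil).mpr ht₂)
    have hb : b₁ = b₂ := Option.some_inj.mp <|
      (List.isChain_cons_cons.mp h₁.isChain).1.symm.trans (List.isChain_cons_cons.mp h₂.isChain).1
    subst hb
    rw [ih h₁.tail h₂.tail]

theorem reachable {a : V} {t : List V} (hh : IsHSAW g X (a :: t)) : Reachable g X a := by
  induction t generalizing a with
  | nil => exact ⟨a, (hh.mem_iff_eq_nil).mpr rfl, .refl⟩
  | cons b s ih =>
    obtain ⟨x, hx, hxb⟩ := ih hh.tail
    exact ⟨x, hx, hxb.tail (List.isChain_cons_cons.mp hh.isChain).1⟩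

end IsHSAW

section

variable {V : Type} [DecidableEq V] {g : V → Option V} {X : Finset V}

theorem exists_isHSAW_of_reachable {v : V} (hv : Reachable g X v) : ∃ t, IsHSAW g X (v :: t) := by
  obtain ⟨s, hs, hsv⟩ := hv
  induction hsv with
  | refl => exact ⟨[], .singleton hs⟩
  | @tail u c _ hcu ih =>
    obtain ⟨t, ht⟩ := ih
    by_cases hcX : c ∈ X
    · exact ⟨[], .singleton hcX⟩
    by_cases hct : c ∈ u :: t
    · exact ht.exists_cons_of_mem hct
    · exact ⟨u :: t, ht.cons hcX hct hcu⟩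

theorem isHSAW_sdiff_iff {g : V → Option V} {X S : Finset V} {h : List V}
    (hS : ∀ v ∈ h, v ∉ S) : IsHSAW g (X \ S) h ↔ IsHSAW g X h := by
  have hX : ∀ v ∈ h, (v ∈ X \ S ↔ v ∈ X) := fun v hv => by simp [hS v hv]
  simp only [IsHSAW]
  exact and_congr_right' <| and_congr_right' <| and_congr_right' <|
    forall₂_congr fun v hv => by rw [hX v hv]

/-- Each reachable node is the first node of exactly one hitting walk. -/
theorem card_reachable_eq_card_isHSAW (g : V → Option V) (X : Finset V) :
    Nat.card {v // Reachable g X v} = Nat.card {h // IsHSAW g X h} := by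
  symm
  refine Nat.card_congr (Equiv.ofBijective
    (fun h => ⟨h.1.head h.2.1, ?_⟩) ⟨fun h₁ h₂ hhead => ?_, fun v => ?_⟩)
  · obtain ⟨_ | ⟨a, t⟩, hh⟩ := h
    exacts [absurd rfl hh.1, hh.reachable]
  · obtain ⟨_ | ⟨a₁, t₁⟩, hh₁⟩ := h₁
    · exact absurd rfl hh₁.1
    obtain ⟨_ | ⟨a₂, t₂⟩, hh₂⟩ := h₂
    · exact absurd rfl hh₂.1
    obtain rfl : a₁ = a₂ := congrArg Subtype.val hhead
    exact Subtype.ext (congrArg (a₁ :: ·) (hh₁.tail_unique hh₂))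
  · obtain ⟨t, ht⟩ := exists_isHSAW_of_reachable v.2
    exact ⟨⟨v.1 :: t, ht⟩, rfl⟩

end

section

variable {V : Type} [Fintype V]

variable (V) in
def nodupLists : Finset (List V) :=
  Finset.univ.map (Function.Embedding.subtype List.Nodup)

theorem mem_nodupLists {l : List V} : l ∈ nodupLists V ↔ l.Nodup := by
  simp [nodupLists]

theorem tsum_subtype_eq_sum_nodupLists (P : List V → Prop) [DecidablePred P]
    (hP : ∀ l, P l → l.Nodup) (f : List V → ℝ) :
    ∑' l : {l // P l}, f l = ∑ l ∈ nodupLists V with P l, f l := by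
  have hmem : ∀ l, l ∈ (nodupLists V).filter P ↔ P l := fun l => by
    simpa [mem_nodupLists] using hP l
  let := Fintype.subtype _ hmem
  rw [tsum_fintype, Finset.sum_subtype _ hmem]

def inEdgeProb (w : V → V → ℝ) (v : V) (o : Option V) : ℝ :=
  o.elim (1 - ∑ u : V, w u v) (fun u => w u v)

theorem sampleProb_eq_prod (w : V → V → ℝ) (g : V → Option V) :
    sampleProb w g = ∏ v, inEdgeProb w v (g v) := rfl

theorem sum_inEdgeProb (w : V → V → ℝ) (v : V) : ∑ o, inEdgeProb w v o = 1 := by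
  simp [inEdgeProb, Fintype.sum_option]

variable [DecidableEq V]

theorem card_isHSAW_eq_sum (g : V → Option V) (X : Finset V) :
    (Nat.card {h // IsHSAW g X h} : ℝ) = ∑ h ∈ nodupLists V, if IsHSAW g X h then 1 else 0 := by
  have hmem : ∀ h, h ∈ (nodupLists V).filter (IsHSAW g X) ↔ IsHSAW g X h := fun h => by
    simpa [mem_nodupLists] using fun hh : IsHSAW g X h => hh.2.1
  rw [Finset.sum_boole, ← Nat.card_eq_finsetCard, Nat.card_congr (Equiv.subtypeEquivRight hmem)]

theorem sum_seedProb_mul_influence (w : V → V → ℝ) (VI : Finset V) (p : V → ℝ)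
    (Y : Finset V → Finset V) :
    ∑ X ∈ VI.powerset, seedProb VI p X * influence w (Y X)
      = ∑ h ∈ nodupLists V, ∑ g, ∑ X ∈ VI.powerset,
          if IsHSAW g (Y X) h then sampleProb w g * seedProb VI p X else 0 := by
  simp only [influence, card_reachable_eq_card_isHSAW, card_isHSAW_eq_sum, Finset.mul_sum,
    mul_ite, mul_one, mul_zero]
  simp_rw [mul_comm (seedProb VI p _) (sampleProb w _)]
  calc _ = ∑ g, ∑ X ∈ VI.powerset, ∑ h ∈ nodupLists V,
          if IsHSAW g (Y X) h then sampleProb w g * seedProb VI p X else 0 := Finset.sum_comm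
    _ = ∑ g, ∑ h ∈ nodupLists V, ∑ X ∈ VI.powerset,
          if IsHSAW g (Y X) h then sampleProb w g * seedProb VI p X else 0 :=
        Finset.sum_congr rfl fun _ _ => Finset.sum_comm
    _ = _ := Finset.sum_comm

def deleteNodes (w : V → V → ℝ) (S : Finset V) : V → V → ℝ :=
  fun u v => if u ∈ S ∨ v ∈ S then 0 else w u v

def walkProbDelNodes (w : V → V → ℝ) (VI : Finset V) (p : V → ℝ) (S : Finset V)
    (h : List V) : ℝ :=
  ∑ g : V → Option V, ∑ X ∈ VI.powerset,
    (if IsHSAW g (X \ S) h then sampleProb (deleteNodes w S) g * seedProb VI p X else 0)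

theorem influenceVI_eq_sum_walkProb (w : V → V → ℝ) (VI : Finset V) (p : V → ℝ) :
    influenceVI w VI p = ∑ h ∈ nodupLists V, walkProb w VI p h :=
  sum_seedProb_mul_influence w VI p id

theorem influenceVIDelNodes_eq_sum_walkProbDelNodes (w : V → V → ℝ) (VI : Finset V)
    (p : V → ℝ) (S : Finset V) :
    influenceVIDelNodes w VI p S = ∑ h ∈ nodupLists V, walkProbDelNodes w VI p S h :=
  sum_seedProb_mul_influence (deleteNodes w S) VI p (· \ S)

theorem walkProb_eq_zero {w : V → V → ℝ} {VI : Finset V} {p : V → ℝ} {h : List V}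
    (hh : ¬ ∃ v ∈ VI, h.getLast? = some v) : walkProb w VI p h = 0 := by
  refine Finset.sum_eq_zero fun g _ => Finset.sum_eq_zero fun X hX =>
    ite_eq_right_iff.mpr fun hhsaw => absurd ?_ hh
  have hlast := List.getLast?_eq_some_getLast hhsaw.1
  exact ⟨_, Finset.mem_powerset.mp hX ((hhsaw.2.2.2 _ (List.getLast_mem hhsaw.1)).mpr hlast), hlast⟩

theorem sum_walkProb_filter_getLast_mem (w : V → V → ℝ) (VI : Finset V) (p : V → ℝ)
    (P : List V → Prop) [DecidablePred P] :
    ∑ h ∈ nodupLists V with (h.Nodup ∧ ∃ v ∈ VI, h.getLast? = some v) ∧ P h, walkProb w VI p h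
      = ∑ h ∈ nodupLists V with P h, walkProb w VI p h := by
  rw [Finset.sum_filter, Finset.sum_filter]
  refine Finset.sum_congr rfl fun h hh => ?_
  by_cases hVI : ∃ v ∈ VI, h.getLast? = some v
  · simp [mem_nodupLists.mp hh, hVI]
  · simp [hVI, walkProb_eq_zero hVI]

theorem sum_sampleProb_of_forall_mem (w : V → V → ℝ) (A : V → Finset (Option V)) :
    ∑ g, (if ∀ v, g v ∈ A v then sampleProb w g else 0)
      = ∏ v, ∑ o ∈ A v, inEdgeProb w v o := by
  rw [Finset.prod_univ_sum, ← Finset.sum_filter]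
  congr 1
  ext g
  simp [Fintype.mem_piFinset]

def livePathProb (w : V → V → ℝ) (h : List V) : ℝ :=
  ∑ g, if h.IsChain (fun a b => g a = some b) then sampleProb w g else 0

theorem livePathProb_eq_prod (w : V → V → ℝ) (h : List V) :
    livePathProb w h = ∏ v, ∑ o with ∀ u, (u, v) ∈ walkEdges h → o = some u,
      inEdgeProb w v o := by
  rw [← sum_sampleProb_of_forall_mem, livePathProb]
  refine Finset.sum_congr rfl fun g _ => if_congr ?_ rfl rfl
  simp only [isChain_iff_forall_mem_walkEdges, Finset.mem_filter, Finset.mem_univ, true_and]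
  exact forall_comm

theorem livePathProb_deleteNodes {w : V → V → ℝ} {S : Finset V} {h : List V}
    (hS : ∀ v ∈ h, v ∉ S) : livePathProb (deleteNodes w S) h = livePathProb w h := by
  rw [livePathProb_eq_prod, livePathProb_eq_prod]
  refine Finset.prod_congr rfl fun v _ => ?_
  by_cases hv : ∃ u, (u, v) ∈ walkEdges h
  · obtain ⟨u, hu⟩ := hv
    refine Finset.sum_congr rfl fun o ho => ?_
    obtain rfl := (Finset.mem_filter.mp ho).2 u hu
    obtain ⟨huh, hvh⟩ := mem_of_mem_walkEdges hu
    simp [inEdgeProb, deleteNodes, hS u huh, hS v hvh]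
  · push Not at hv
    rw [Finset.filter_true_of_mem fun o _ u hu => absurd hu (hv u), sum_inEdgeProb,
      sum_inEdgeProb]

theorem walkProb_eq_livePathProb_mul (w : V → V → ℝ) (VI : Finset V) (p : V → ℝ) (h : List V) :
    walkProb w VI p h = livePathProb w h * ∑ X ∈ VI.powerset,
      if h ≠ [] ∧ h.Nodup ∧ ∀ v ∈ h, (v ∈ X ↔ h.getLast? = some v) then seedProb VI p X else 0 := by
  rw [livePathProb, Finset.sum_mul_sum]
  refine Finset.sum_congr rfl fun g _ => Finset.sum_congr rfl fun X _ => ?_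
  rw [ite_zero_mul_ite_zero]
  exact if_congr ⟨fun hh => ⟨hh.isChain, hh.1, hh.2.1, hh.2.2.2⟩,
    fun ⟨hc, hne, hnd, hX⟩ => ⟨hne, hnd, hc, hX⟩⟩ rfl rfl

theorem walkProbDelNodes_eq_walkProb {w : V → V → ℝ} {VI : Finset V} {p : V → ℝ}
    {S : Finset V} {h : List V} (hS : ∀ v ∈ h, v ∉ S) :
    walkProbDelNodes w VI p S h = walkProb w VI p h := by
  have hdel : walkProbDelNodes w VI p S h = walkProb (deleteNodes w S) VI p h :=
    Finset.sum_congr rfl fun g _ => Finset.sum_congr rfl fun X _ =>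
      if_congr (isHSAW_sdiff_iff hS) rfl rfl
  rw [hdel, walkProb_eq_livePathProb_mul, walkProb_eq_livePathProb_mul,
    livePathProb_deleteNodes hS]

/-- A deleted node `v` on a hitting walk is not its last node (that one is a seed outside `S`),
so the walk must use the deleted in-edge of `v`. -/
theorem walkProbDelNodes_eq_zero {w : V → V → ℝ} {VI : Finset V} {p : V → ℝ}
    {S : Finset V} {h : List V} {v : V} (hv : v ∈ h) (hvS : v ∈ S) :
    walkProbDelNodes w VI p S h = 0 := by
  refine Finset.sum_eq_zero fun g _ => Finset.sum_eq_zero fun X _ =>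
    ite_eq_right_iff.mpr fun hh => ?_
  have hlast : h.getLast? ≠ some v := fun hl =>
    (Finset.mem_sdiff.mp ((hh.2.2.2 v hv).mpr hl)).2 hvS
  obtain ⟨u, hu⟩ := exists_mem_walkEdges_of_ne_getLast hv hlast
  have hgv : g v = some u := isChain_iff_forall_mem_walkEdges.mp hh.isChain u v hu
  rw [sampleProb_eq_prod, Finset.prod_eq_zero (Finset.mem_univ v)
    (by simp [hgv, inEdgeProb, deleteNodes, hvS]), zero_mul]

theorem influenceVI_sub_influenceVIDelNodes (w : V → V → ℝ) (VI : Finset V) (p : V → ℝ)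
    (S : Finset V) :
    influenceVI w VI p - influenceVIDelNodes w VI p S
      = ∑ h ∈ nodupLists V with ∃ v ∈ S, v ∈ h, walkProb w VI p h := by
  rw [influenceVI_eq_sum_walkProb, influenceVIDelNodes_eq_sum_walkProbDelNodes,
    ← Finset.sum_sub_distrib, Finset.sum_filter]
  refine Finset.sum_congr rfl fun h _ => ?_
  split_ifs with hS
  · obtain ⟨v, hvS, hv⟩ := hS
    rw [walkProbDelNodes_eq_zero hv hvS, sub_zero]
  · rw [walkProbDelNodes_eq_walkProb fun v hv hvS => hS ⟨v, hvS, hv⟩, sub_self]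

end

theorem stmt_2_general {V : Type} [Fintype V] [DecidableEq V]
    (w : V → V → ℝ)
    (VI : Finset V) (p : V → ℝ)
    (S : Finset V) :
    influenceVI w VI p - influenceVIDelNodes w VI p S
      = (∑' h : {l : List V // (l.Nodup ∧ ∃ v ∈ VI, l.getLast? = some v) ∧
            ∃ v ∈ S, v ∈ l},
          walkProb w VI p h.val) ∧
    (0 < influenceVI w VI p →
      influenceVI w VI p - influenceVIDelNodes w VI p S
        = influenceVI w VI p *
          ((∑' h : {l : List V // (l.Nodup ∧ ∃ v ∈ VI, l.getLast? = some v) ∧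
                ∃ v ∈ S, v ∈ l},
              walkProb w VI p h.val) /
            (∑' h : {l : List V // l.Nodup ∧ ∃ v ∈ VI, l.getLast? = some v},
              walkProb w VI p h.val))) := by
  have hsuspension : influenceVI w VI p - influenceVIDelNodes w VI p S
      = ∑' h : {l : List V // (l.Nodup ∧ ∃ v ∈ VI, l.getLast? = some v) ∧ ∃ v ∈ S, v ∈ l},
          walkProb w VI p h.val := by
    rw [tsum_subtype_eq_sum_nodupLists _ fun l hl => hl.1.1, sum_walkProb_filter_getLast_mem,
      influenceVI_sub_influenceVIDelNodes]
  have htotal : ∑' h : {l : List V // l.Nodup ∧ ∃ v ∈ VI, l.getLast? = some v},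
      walkProb w VI p h.val = influenceVI w VI p := by
    rw [tsum_subtype_eq_sum_nodupLists _ fun l hl => hl.1, influenceVI_eq_sum_walkProb]
    exact Finset.sum_filter_of_ne fun h hh hne =>
      ⟨mem_nodupLists.mp hh, by_contra fun hVI => hne (walkProb_eq_zero hVI)⟩
  refine ⟨hsuspension, fun hpos => ?_⟩
  rw [hsuspension, htotal, mul_div_cancel₀ _ hpos.ne']

/-- Theorem 5 (node version): for a stochastic graph `(V, E, w)`, a
probabilistic suspect set `(VI, p)` and a node set `S ⊆ V`, the node influence
suspension `D⁽ⁿ⁾(S, 𝒱_I) = I_𝒢(𝒱_I) − I_{𝒢∖S}(𝒱_I)` equals the total walk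
probability of the hitting self-avoiding walks whose node set intersects `S`;
hence if `I_𝒢(𝒱_I) > 0` it equals `I_𝒢(𝒱_I)` times the probability that a random
HSAW (drawn proportionally to walk probability) has a node in `S`. -/
theorem stmt_2 {V : Type} [Fintype V] [DecidableEq V]
    (E : Finset (V × V)) (w : V → V → ℝ)
    (hw01 : ∀ u v, 0 ≤ w u v ∧ w u v ≤ 1)
    (hwE : ∀ u v, (u, v) ∉ E → w u v = 0)
    (hwsum : ∀ v, ∑ u : V, w u v ≤ 1)
    (VI : Finset V) (p : V → ℝ) (hp : ∀ v ∈ VI, 0 ≤ p v ∧ p v ≤ 1)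
    (S : Finset V) :
    influenceVI w VI p - influenceVIDelNodes w VI p S
      = (∑' h : {l : List V // (l.Nodup ∧ ∃ v ∈ VI, l.getLast? = some v) ∧
            ∃ v ∈ S, v ∈ l},
          walkProb w VI p h.val) ∧
    (0 < influenceVI w VI p →
      influenceVI w VI p - influenceVIDelNodes w VI p S
        = influenceVI w VI p *
          ((∑' h : {l : List V // (l.Nodup ∧ ∃ v ∈ VI, l.getLast? = some v) ∧
                ∃ v ∈ S, v ∈ l},
              walkProb w VI p h.val) /
            (∑' h : {l : List V // l.Nodup ∧ ∃ v ∈ VI, l.getLast? = some v},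
              walkProb w VI p h.val))) :=
  stmt_2_general w VI p S
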